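/- arXiv:1302.3144 — 3 statements merged into one kernel-verified Lean document; each statement's English description precedes it below -/
import Mathlib

section
/- Fix $u \ge 0$, $\lambda > 0$, $\nu > 0$, and $\rho \in (0,1)$ with $\rho = \lambda/\mu$ for some $\mu > 0$. Define $h(\rho) = e^{-(1-\rho) u}$ and $G(r) = \left(\frac{1-\rho}{1-\rho r}\right)^{1+\lambda/\nu} e^{(r-1)\lambda/\nu}$. Then, holding $\mu$ and $\nu$ fixed and letting $\lambda \uparrow \mu$ (so $\rho \uparrow 1$), $\lim_{\rho \uparrow 1} G(h(\rho)) = (1+u)^{-(1+\mu/\nu)}$. -/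
/-!
Write `ε = 1 - ρ` with `ρ = λ/μ`. The base of the power is `ε / g ε` with
`g ε = 1 - (1 - ε) e^{-εu}`; since `g 0 = 0` and `g' 0 = 1 + u`, it tends to `(1 + u)⁻¹` as
`ε → 0`, while the exponent `1 + λ/ν` tends to `1 + μ/ν` and the factor `e^{(h(ρ)-1)λ/ν}`
tends to `1` by continuity.
-/

open Filter Real Topology

lemma hasDerivAt_one_sub_one_sub_mul_exp (u : ℝ) :
    HasDerivAt (fun ε : ℝ => 1 - (1 - ε) * exp (-ε * u)) (1 + u) 0 := by
  have hlin : HasDerivAt (fun ε : ℝ => -ε * u) (-u) 0 := by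
    simpa using (hasDerivAt_id (0 : ℝ)).neg.mul_const u
  refine ((((hasDerivAt_id' (0 : ℝ)).const_sub 1).mul hlin.exp).const_sub 1).congr_deriv ?_
  simp [add_comm]

lemma tendsto_div_one_sub_one_sub_mul_exp {u : ℝ} (hu : 1 + u ≠ 0) :
    Tendsto (fun ε : ℝ => ε / (1 - (1 - ε) * exp (-ε * u))) (𝓝[≠] 0) (𝓝 (1 + u)⁻¹) := by
  have hslope := hasDerivAt_iff_tendsto_slope.1 (hasDerivAt_one_sub_one_sub_mul_exp u)
  refine (hslope.inv₀ hu).congr fun ε => ?_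
  simp [slope_def_field]

lemma tendsto_one_sub_div_nhdsNE {μ : ℝ} (hμ : μ ≠ 0) :
    Tendsto (fun l : ℝ => 1 - l / μ) (𝓝[≠] μ) (𝓝[≠] 0) := by
  refine tendsto_nhdsWithin_iff.2 ⟨?_, ?_⟩
  · have h : Tendsto (fun l : ℝ => 1 - l / μ) (𝓝 μ) (𝓝 (1 - μ / μ)) :=
      (continuous_const.sub (continuous_id.div_const μ)).tendsto μ
    rw [div_self hμ, sub_self] at h
    exact h.mono_left nhdsWithin_le_nhds
  · filter_upwards [self_mem_nhdsWithin] with l hl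
    rw [Set.mem_compl_singleton_iff, sub_ne_zero, ne_comm, Ne, div_eq_one_iff_eq hμ]
    exact hl

theorem stmt_10_general (u μ ν : ℝ) (hu : 0 ≤ u) (hμ : 0 < μ) :
    Tendsto (fun l : ℝ =>
        ((1 - l / μ) / (1 - (l / μ) * Real.exp (-(1 - l / μ) * u))) ^ (1 + l / ν) *
          Real.exp ((Real.exp (-(1 - l / μ) * u) - 1) * l / ν))
      (nhdsWithin μ (Set.Iio μ)) (nhds ((1 + u) ^ (-(1 + μ / ν)))) := by
  have h1u : 0 < 1 + u := by linarith
  have hleft : 𝓝[<] μ ≤ 𝓝[≠] μ := nhdsWithin_mono μ fun _ hl => ne_of_lt hl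
  have hbase : Tendsto (fun l : ℝ => (1 - l / μ) / (1 - (l / μ) * exp (-(1 - l / μ) * u)))
      (𝓝[<] μ) (𝓝 (1 + u)⁻¹) := by
    refine ((tendsto_div_one_sub_one_sub_mul_exp h1u.ne').comp
      ((tendsto_one_sub_div_nhdsNE hμ.ne').mono_left hleft)).congr fun l => ?_
    simp only [Function.comp, sub_sub_cancel]
  have hexponent : Tendsto (fun l : ℝ => 1 + l / ν) (𝓝[<] μ) (𝓝 (1 + μ / ν)) :=
    ((continuous_const.add (continuous_id.div_const ν)).tendsto μ).mono_left nhdsWithin_le_nhds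
  have hfactor : Tendsto (fun l : ℝ => exp ((exp (-(1 - l / μ) * u) - 1) * l / ν))
      (𝓝[<] μ) (𝓝 1) := by
    have h : Tendsto (fun l : ℝ => exp ((exp (-(1 - l / μ) * u) - 1) * l / ν)) (𝓝 μ)
        (𝓝 (exp ((exp (-(1 - μ / μ) * u) - 1) * μ / ν))) :=
      Continuous.tendsto (by fun_prop) μ
    simpa [div_self hμ.ne'] using h.mono_left nhdsWithin_le_nhds
  convert (hbase.rpow hexponent (Or.inl (inv_ne_zero h1u.ne'))).mul hfactor using 2
  rw [mul_one, rpow_neg h1u.le, inv_rpow h1u.le]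

theorem stmt_10 (u μ ν : ℝ) (hu : 0 ≤ u) (hμ : 0 < μ) (hν : 0 < ν) :
    Tendsto (fun l : ℝ =>
        ((1 - l / μ) / (1 - (l / μ) * Real.exp (-(1 - l / μ) * u))) ^ (1 + l / ν) *
          Real.exp ((Real.exp (-(1 - l / μ) * u) - 1) * l / ν))
      (nhdsWithin μ (Set.Iio μ)) (nhds ((1 + u) ^ (-(1 + μ / ν)))) :=
  stmt_10_general u μ ν hu hμ
end

section
/- Let $\mu > 0$, $0 < \lambda < \mu$, $\rho = \lambda/\mu$, and $\nu > 0$. With $\tilde{B}(s) = \mu/(\mu+s)$, the following identity holds for all $r \in [0,1)$: $\frac{(1-\rho)\tilde{B}(\lambda(1-r))(1-r)}{\tilde{B}(\lambda(1-r)) - r} \exp\left(\int_r^1 \frac{-\lambda(1-x)}{\nu(\tilde{B}(\lambda(1-x)) - x)} dx\right) = \left(\frac{1-\rho}{1-\rho r}\right)^{1+\lambda/\nu} e^{(r-1)\lambda/\nu}$. -/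
/-! With `B̃(s) = μ / (μ + s)` one has `B̃(λ(1-x)) - x = (1-x)(μ-λx)/(μ+λ(1-x))`, so the
integrand is `-(λ/ν)(1 + λ/(μ-λx))` and the integral equals `(λ/ν)(log q - (1-r))` with
`q = (μ-λ)/(μ-λr) = (1-ρ)/(1-ρr)`. The prefactor simplifies to `q` as well. -/

open Real

section ExponentialService

variable {lam μ : ℝ}

theorem exp_service_sub_eq {x : ℝ} (h : μ + lam * (1 - x) ≠ 0) :
    μ / (μ + lam * (1 - x)) - x = (1 - x) * (μ - lam * x) / (μ + lam * (1 - x)) := by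
  field_simp
  ring

theorem one_sub_div_exp_service_sub {x : ℝ} (hx : x ≠ 1) (h : μ + lam * (1 - x) ≠ 0) :
    (1 - x) / (μ / (μ + lam * (1 - x)) - x) = (μ + lam * (1 - x)) / (μ - lam * x) := by
  have : 1 - x ≠ 0 := sub_ne_zero.mpr hx.symm
  rw [exp_service_sub_eq h]
  field_simp

theorem integral_div_sub_mul {a b : ℝ} (h : ∀ x ∈ Set.uIcc a b, 0 < μ - lam * x) :
    ∫ x in a..b, lam / (μ - lam * x) = log (μ - lam * a) - log (μ - lam * b) := by
  have hderiv : ∀ x ∈ Set.uIcc a b,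
      HasDerivAt (fun x => -log (μ - lam * x)) (lam / (μ - lam * x)) x := by
    intro x hx
    have hlin : HasDerivAt (fun x => μ - lam * x) (-lam) x := by
      simpa using ((hasDerivAt_id x).const_mul lam).const_sub μ
    simpa only [neg_div, neg_neg] using (hlin.log (h x hx).ne').fun_neg
  have hcont : ContinuousOn (fun x => lam / (μ - lam * x)) (Set.uIcc a b) :=
    continuousOn_const.div (by fun_prop) fun x hx => (h x hx).ne'
  rw [intervalIntegral.integral_eq_sub_of_hasDerivAt hderiv hcont.intervalIntegrable]
  ring

theorem integral_one_sub_div_exp_service_sub (hlam : 0 ≤ lam) (hlt : lam < μ) {r : ℝ}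
    (hr : r ≤ 1) :
    ∫ x in r..1, (1 - x) / (μ / (μ + lam * (1 - x)) - x) =
      1 - r - log ((μ - lam) / (μ - lam * r)) := by
  have hpos : ∀ x ∈ Set.uIcc r 1, 0 < μ - lam * x := by
    intro x hx
    rw [Set.uIcc_of_le hr] at hx
    nlinarith [hx.2]
  have hcongr : Set.EqOn (fun x => (1 - x) / (μ / (μ + lam * (1 - x)) - x))
      (fun x => 1 + lam / (μ - lam * x)) (Set.Ioo r 1) := by
    intro x hx
    have h₁ : 0 < μ + lam * (1 - x) := by nlinarith [hx.2]
    have hsub := hpos x (Set.Ioo_subset_Icc_self.trans Set.Icc_subset_uIcc hx)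
    dsimp only
    rw [one_sub_div_exp_service_sub hx.2.ne h₁.ne']
    field_simp
    ring
  have hint : IntervalIntegrable (fun x => lam / (μ - lam * x)) MeasureTheory.volume r 1 :=
    (continuousOn_const.div (by fun_prop) fun x hx => (hpos x hx).ne').intervalIntegrable
  rw [intervalIntegral.integral_congr_Ioo_of_le hr hcongr,
    intervalIntegral.integral_add intervalIntegrable_const hint, integral_div_sub_mul hpos,
    log_div (by simpa using (hpos 1 Set.right_mem_uIcc).ne') (hpos r Set.left_mem_uIcc).ne']
  simp only [intervalIntegral.integral_const, smul_eq_mul, mul_one]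
  ring

end ExponentialService

theorem stmt_11_general (lam μ ν ρ : ℝ) (hμ : 0 < μ) (hlam : 0 < lam) (hlt : lam < μ)
    (hρ : ρ = lam / μ)
    (B : ℝ → ℝ) (hB : ∀ s, B s = μ / (μ + s)) :
    ∀ r ∈ Set.Ico (0:ℝ) 1,
      (1 - ρ) * B (lam * (1 - r)) * (1 - r) / (B (lam * (1 - r)) - r) *
        Real.exp (∫ x in r..1, -lam * (1 - x) / (ν * (B (lam * (1 - x)) - x))) =
      ((1 - ρ) / (1 - ρ * r)) ^ (1 + lam / ν) * Real.exp ((r - 1) * lam / ν) := by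
  rintro r ⟨-, hr⟩
  set q := (μ - lam) / (μ - lam * r) with hq_def
  have hq : 0 < q := div_pos (by linarith) (by nlinarith)
  have hprefactor : (1 - ρ) * B (lam * (1 - r)) * (1 - r) / (B (lam * (1 - r)) - r) = q := by
    have hden : μ + lam * (1 - r) ≠ 0 := by nlinarith
    rw [mul_div_assoc, hB, one_sub_div_exp_service_sub hr.ne hden, hρ, hq_def]
    field_simp
  have hbase : (1 - ρ) / (1 - ρ * r) = q := by
    rw [hρ, hq_def]
    field_simp
  have hintegral : ∫ x in r..1, -lam * (1 - x) / (ν * (B (lam * (1 - x)) - x)) =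
      log q * (lam / ν) + (r - 1) * lam / ν := by
    have hintegrand : (fun x => -lam * (1 - x) / (ν * (B (lam * (1 - x)) - x))) =
        fun x => -(lam / ν) * ((1 - x) / (μ / (μ + lam * (1 - x)) - x)) := by
      funext x
      rw [hB, mul_div_mul_comm, neg_div]
    rw [hintegrand, intervalIntegral.integral_const_mul,
      integral_one_sub_div_exp_service_sub hlam.le hlt hr.le]
    ring
  rw [hprefactor, hbase, hintegral, exp_add, rpow_add hq, rpow_one, rpow_def_of_pos hq]
  ring

theorem stmt_11 (lam μ ν ρ : ℝ) (hμ : 0 < μ) (hlam : 0 < lam) (hlt : lam < μ)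
    (hρ : ρ = lam / μ) (hν : 0 < ν)
    (B : ℝ → ℝ) (hB : ∀ s, B s = μ / (μ + s)) :
    ∀ r ∈ Set.Ico (0:ℝ) 1,
      (1 - ρ) * B (lam * (1 - r)) * (1 - r) / (B (lam * (1 - r)) - r) *
        Real.exp (∫ x in r..1, -lam * (1 - x) / (ν * (B (lam * (1 - x)) - x))) =
      ((1 - ρ) / (1 - ρ * r)) ^ (1 + lam / ν) * Real.exp ((r - 1) * lam / ν) :=
  stmt_11_general lam μ ν ρ hμ hlam hlt hρ B hB
end

section
/- Let $\lambda, \mu > 0$ with $\rho = \lambda/\mu < 1$, and let $k \ge 1$ be an integer. Define $\pi(i,0) = \binom{i+k-1}{i}(1-\rho)^{k+1}\rho^i$ for $i \ge 0$ and $\pi(i,1) = \binom{i+k-1}{i-1}(1-\rho)^{k+1}\rho^i$ for $i \ge 1$ (with $\pi(0,1)=0$). Then these numbers satisfy the balance equations $\lambda \pi(0,0) = \mu \pi(1,1)$; $(\lambda + \mu)\pi(1,1) = f(1)\pi(1,0) + \mu(1-\psi(1))\pi(2,1)$; $(\lambda + f(i))\pi(i,0) = \lambda \pi(i-1,0) +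 \mu \psi(i) \pi(i+1,1)$ for $i \ge 1$; and $(\lambda+\mu)\pi(i,1) = \lambda \pi(i-1,1) + f(i)\pi(i,0) + \mu(1-\psi(i))\pi(i+1,1)$ for $i \ge 2$, where $\psi(i) = k/(k+i)$ and $f(i) = \mu i/(i+k-1)$; moreover $\sum_{i,j}\pi(i,j) = 1$ and $\pi(i,0)+\pi(i,1) = \binom{i+k}{i}(1-\rho)^{k+1}\rho^i$ for $i \ge 1$. -/
/-! The balance equations are linear consequences of three local relations:
`μ π₁ (i + 1) = λ (π₀ i + π₁ i)` (the flows across the cut between levels `i` and `i + 1`),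
`f (i + 1) π₀ (i + 1) = λ π₀ i` and `μ ψ i π₁ (i + 1) = λ π₀ i`. For the given weights each of
them is a one-step binomial identity. By Pascal's rule the mass `π₀ i + π₁ i` of level `i` is the
negative binomial weight `C(i + k, i) (1 - ρ)^(k + 1) ρ^i`, which sums to `1`. -/

section GlobalBalance

variable {lam μ : ℝ} {π₀ π₁ ψ f : ℕ → ℝ}

theorem globalBalance_of_localBalance (hπ₁0 : π₁ 0 = 0)
    (hcut : ∀ i, μ * π₁ (i + 1) = lam * (π₀ i + π₁ i))
    (hact : ∀ i, f (i + 1) * π₀ (i + 1) = lam * π₀ i)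
    (hvac : ∀ i, μ * ψ i * π₁ (i + 1) = lam * π₀ i) :
    lam * π₀ 0 = μ * π₁ 1 ∧
    (lam + μ) * π₁ 1 = f 1 * π₀ 1 + μ * (1 - ψ 1) * π₁ 2 ∧
    (∀ i ≥ 1, (lam + f i) * π₀ i = lam * π₀ (i - 1) + μ * ψ i * π₁ (i + 1)) ∧
    (∀ i ≥ 2, (lam + μ) * π₁ i =
      lam * π₁ (i - 1) + f i * π₀ i + μ * (1 - ψ i) * π₁ (i + 1)) := by
  have busy : ∀ i, (lam + μ) * π₁ (i + 1) =
      lam * π₁ i + f (i + 1) * π₀ (i + 1) + μ * (1 - ψ (i + 1)) * π₁ (i + 2) := fun i => by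
    linear_combination hcut i - hcut (i + 1) - hact i + hvac (i + 1)
  refine ⟨by linear_combination -hcut 0 - lam * hπ₁0, ?_, ?_, ?_⟩
  · linear_combination busy 0 + lam * hπ₁0
  · rintro (_ | i) hi
    · omega
    · rw [Nat.add_sub_cancel]
      linear_combination hact i - hvac (i + 1)
  · rintro (_ | _ | i) hi
    · omega
    · omega
    · exact busy (i + 1)

end GlobalBalance

section NegativeBinomial

-- `m = k - 1`, so that no truncated subtraction occurs.

variable {ρ c μ : ℝ} {m : ℕ} {π₀ π₁ : ℕ → ℝ}

theorem idle_add_busy_eq (hπ₀ : ∀ i, π₀ i = (i + m).choose i * c * ρ ^ i) (hπ₁0 : π₁ 0 = 0)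
    (hπ₁ : ∀ i, π₁ (i + 1) = (i + m + 1).choose i * c * ρ ^ (i + 1)) (i : ℕ) :
    π₀ i + π₁ i = (i + m + 1).choose i * c * ρ ^ i := by
  cases i with
  | zero => simp [hπ₀, hπ₁0]
  | succ i =>
    have pascal := Nat.choose_succ_succ' (i + m + 1) i
    rw [hπ₀, hπ₁, show i + 1 + m = i + m + 1 by ring, pascal]
    push_cast
    ring

theorem busy_succ_eq_mul_idle_add_busy (hπ₀ : ∀ i, π₀ i = (i + m).choose i * c * ρ ^ i)
    (hπ₁0 : π₁ 0 = 0) (hπ₁ : ∀ i, π₁ (i + 1) = (i + m + 1).choose i * c * ρ ^ (i + 1)) (i : ℕ) :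
    π₁ (i + 1) = ρ * (π₀ i + π₁ i) := by
  rw [idle_add_busy_eq hπ₀ hπ₁0 hπ₁, hπ₁]
  ring

theorem activation_flow_eq (hπ₀ : ∀ i, π₀ i = (i + m).choose i * c * ρ ^ i) (i : ℕ) :
    μ * (i + 1) / (i + m + 1) * π₀ (i + 1) = ρ * μ * π₀ i := by
  have key : ((i : ℝ) + 1) * (i + m + 1).choose (i + 1) = (i + m + 1) * (i + m).choose i := by
    have h : (i + 1) * (i + m + 1).choose (i + 1) = (i + m + 1) * (i + m).choose i := by
      linarith [Nat.add_one_mul_choose_eq (i + m) i]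
    exact_mod_cast h
  rw [hπ₀, hπ₀, show i + 1 + m = i + m + 1 by ring]
  field_simp
  linear_combination μ * c * ρ ^ (i + 1) * key

theorem vacation_flow_eq (hπ₀ : ∀ i, π₀ i = (i + m).choose i * c * ρ ^ i)
    (hπ₁ : ∀ i, π₁ (i + 1) = (i + m + 1).choose i * c * ρ ^ (i + 1)) (i : ℕ) :
    μ * ((m + 1) / (m + 1 + i)) * π₁ (i + 1) = ρ * μ * π₀ i := by
  have key : ((m : ℝ) + 1) * (i + m + 1).choose i = (m + 1 + i) * (i + m).choose i := by
    have h := Nat.choose_mul_succ_eq (i + m) i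
    rw [show i + m + 1 - i = m + 1 by omega] at h
    have h' : (m + 1) * (i + m + 1).choose i = (m + 1 + i) * (i + m).choose i := by linarith
    exact_mod_cast h'
  rw [hπ₀, hπ₁]
  field_simp
  linear_combination μ * c * ρ ^ (i + 1) * key

theorem tsum_idle_add_busy (hπ₀ : ∀ i, π₀ i = (i + m).choose i * c * ρ ^ i) (hπ₁0 : π₁ 0 = 0)
    (hπ₁ : ∀ i, π₁ (i + 1) = (i + m + 1).choose i * c * ρ ^ (i + 1)) (hρ : |ρ| < 1) :
    ∑' i, (π₀ i + π₁ i) = c / (1 - ρ) ^ (m + 2) := by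
  have symm : ∀ i, (i + (m + 1)).choose i = (i + (m + 1)).choose (m + 1) :=
    fun i => Nat.choose_symm_add
  simp_rw [idle_add_busy_eq hπ₀ hπ₁0 hπ₁, add_assoc, symm, mul_right_comm _ c]
  rw [tsum_mul_right, tsum_choose_mul_geometric_of_norm_lt_one (m + 1) hρ]
  ring

end NegativeBinomial

theorem stmt_12 (lam μ ρ : ℝ) (hlam : 0 < lam) (hμ : 0 < μ) (hρ : ρ = lam / μ)
    (hρ1 : ρ < 1) (k : ℕ) (hk : 1 ≤ k)
    (π₀ π₁ : ℕ → ℝ)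
    (hπ₀ : ∀ i, π₀ i = (Nat.choose (i + k - 1) i : ℝ) * (1 - ρ) ^ (k + 1) * ρ ^ i)
    (hπ₁0 : π₁ 0 = 0)
    (hπ₁ : ∀ i ≥ 1, π₁ i = (Nat.choose (i + k - 1) (i - 1) : ℝ) * (1 - ρ) ^ (k + 1) * ρ ^ i)
    (ψ f : ℕ → ℝ)
    (hψ : ∀ i, ψ i = (k : ℝ) / ((k : ℝ) + i))
    (hf : ∀ i, f i = μ * i / ((i : ℝ) + k - 1)) :
    lam * π₀ 0 = μ * π₁ 1 ∧
    (lam + μ) * π₁ 1 = f 1 * π₀ 1 + μ * (1 - ψ 1) * π₁ 2 ∧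
    (∀ i ≥ 1, (lam + f i) * π₀ i = lam * π₀ (i - 1) + μ * ψ i * π₁ (i + 1)) ∧
    (∀ i ≥ 2, (lam + μ) * π₁ i =
      lam * π₁ (i - 1) + f i * π₀ i + μ * (1 - ψ i) * π₁ (i + 1)) ∧
    (∑' i : ℕ, (π₀ i + π₁ i)) = 1 ∧
    (∀ i ≥ 1, π₀ i + π₁ i = (Nat.choose (i + k) i : ℝ) * (1 - ρ) ^ (k + 1) * ρ ^ i) := by
  obtain ⟨m, rfl⟩ : ∃ m, k = m + 1 := ⟨k - 1, by omega⟩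
  have hlam_eq : lam = ρ * μ := by rw [hρ]; field_simp
  have h0 : ∀ i, π₀ i = (i + m).choose i * (1 - ρ) ^ (m + 2) * ρ ^ i := hπ₀
  have h1 : ∀ i, π₁ (i + 1) = (i + m + 1).choose i * (1 - ρ) ^ (m + 2) * ρ ^ (i + 1) :=
    fun i => by rw [hπ₁ (i + 1) (by omega), show i + 1 + (m + 1) - 1 = i + m + 1 by omega]; rfl
  have hcut : ∀ i, μ * π₁ (i + 1) = lam * (π₀ i + π₁ i) := fun i => by
    rw [busy_succ_eq_mul_idle_add_busy h0 hπ₁0 h1, hlam_eq]; ring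
  have hact : ∀ i, f (i + 1) * π₀ (i + 1) = lam * π₀ i := fun i => by
    rw [hf, hlam_eq, ← activation_flow_eq h0]; push_cast; ring
  have hvac : ∀ i, μ * ψ i * π₁ (i + 1) = lam * π₀ i := fun i => by
    rw [hψ, hlam_eq, ← vacation_flow_eq h0 h1]; push_cast; ring
  obtain ⟨h_idle0, h_busy1, h_idle, h_busy⟩ := globalBalance_of_localBalance hπ₁0 hcut hact hvac
  refine ⟨h_idle0, h_busy1, h_idle, h_busy, ?_, fun i _ => idle_add_busy_eq h0 hπ₁0 h1 i⟩
  have hρ0 : 0 < ρ := hρ ▸ div_pos hlam hμ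
  rw [tsum_idle_add_busy h0 hπ₁0 h1 (abs_lt.2 ⟨by linarith, hρ1⟩)]
  exact div_self (pow_ne_zero _ (by linarith))
end
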